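/- Let f : ℝ^{m×n} → ℝ be differentiable, let L ∈ ℝ^{m×m} be invertible and R = λQ with λ ≠ 0 and Q ∈ ℝ^{n×n} orthogonal, and suppose f(L W R) = f(W) for all W ∈ ℝ^{m×n}. For W ∈ ℝ^{m×n} write G(W) = ∇f(W) (the gradient with respect to the Frobenius inner product), and suppose G(W)·G(W)ᵀ is invertible. Then the one-step update U(W) = W − η·(G(W)G(W)ᵀ)⁻¹·G(W) is equivariant: L·U(W)·R = U(L W R). -/
import Mathlib

open scoped Matrix

attribute [local instance] Matrix.normedAddCommGroup Matrix.normedSpace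

/-- The Frobenius (trace) inner product `⟨A, B⟩ = tr(AᵀB) = ∑ᵢⱼ Aᵢⱼ Bᵢⱼ`. -/
def frobInner {m n : ℕ} (A B : Matrix (Fin m) (Fin n) ℝ) : ℝ :=
  ∑ i, ∑ j, A i j * B i j

lemma frobInner_eq_trace {m n : ℕ} (A B : Matrix (Fin m) (Fin n) ℝ) :
    frobInner A B = (Aᵀ * B).trace := by
  unfold frobInner
  rw [Matrix.trace, Finset.sum_comm]
  simp [Matrix.diag, Matrix.mul_apply, Matrix.transpose_apply]

lemma frob_move {m n : ℕ} (A H : Matrix (Fin m) (Fin n) ℝ)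
    (L : Matrix (Fin m) (Fin m) ℝ) (R : Matrix (Fin n) (Fin n) ℝ) :
    frobInner A (L * H * R) = frobInner (Lᵀ * A * Rᵀ) H := by
  rw [frobInner_eq_trace, frobInner_eq_trace]
  rw [show (Lᵀ * A * Rᵀ)ᵀ = R * (Aᵀ * L) by simp [Matrix.transpose_mul, mul_assoc]]
  rw [show Aᵀ * (L * H * R) = (Aᵀ * L) * H * R by
    rw [← Matrix.mul_assoc, ← Matrix.mul_assoc]]
  rw [Matrix.trace_mul_cycle (Aᵀ * L) H R]

lemma frob_ext {m n : ℕ} (A B : Matrix (Fin m) (Fin n) ℝ)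
    (h : ∀ H, frobInner A H = frobInner B H) : A = B := by
  have h0 : ∀ H, frobInner (A - B) H = 0 := by
    intro H
    have := h H
    unfold frobInner at *
    simp only [Matrix.sub_apply, sub_mul, Finset.sum_sub_distrib]
    rw [this, sub_self]
  have h2 := h0 (A - B)
  unfold frobInner at h2
  rw [Finset.sum_eq_zero_iff_of_nonneg] at h2
  · ext i j
    have h3 := h2 i (Finset.mem_univ i)
    rw [Finset.sum_eq_zero_iff_of_nonneg (fun j _ => mul_self_nonneg _)] at h3
    have := h3 j (Finset.mem_univ j)
    have h4 : (A - B) i j = 0 := by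
      nlinarith [this]
    have : A i j - B i j = 0 := by simpa [Matrix.sub_apply] using h4
    linarith
  · intro i _
    exact Finset.sum_nonneg fun j _ => mul_self_nonneg _

/-- Equivariance of the Freon (`c = 1`) update: if `f` is differentiable and
invariant under `W ↦ L W R` with `L` invertible and `R = λ Q` (`λ ≠ 0`, `Q` orthogonal), `G(W)`
is the Frobenius gradient of `f`, and `G(W) G(W)ᵀ` is invertible, then the update
`U(W) = W − η (G(W) G(W)ᵀ)⁻¹ G(W)` satisfies `L ⬝ U(W) ⬝ R = U(L W R)`. -/
theorem stmt7 {m n : ℕ}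
    (f : Matrix (Fin m) (Fin n) ℝ → ℝ)
    (L : Matrix (Fin m) (Fin m) ℝ) (hL : IsUnit L)
    (lam : ℝ) (hlam : lam ≠ 0)
    (Q : Matrix (Fin n) (Fin n) ℝ) (hQ : Qᵀ * Q = 1)
    (R : Matrix (Fin n) (Fin n) ℝ) (hR : R = lam • Q)
    (hinv : ∀ W : Matrix (Fin m) (Fin n) ℝ, f (L * W * R) = f W)
    (G : Matrix (Fin m) (Fin n) ℝ → Matrix (Fin m) (Fin n) ℝ)
    (Df : Matrix (Fin m) (Fin n) ℝ → (Matrix (Fin m) (Fin n) ℝ →L[ℝ] ℝ))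
    -- `f` is differentiable with gradient `G` with respect to the Frobenius inner product:
    (hDf : ∀ W, HasFDerivAt f (Df W) W)
    (hDf_grad : ∀ W H, Df W H = frobInner (G W) H)
    (η : ℝ)
    (W : Matrix (Fin m) (Fin n) ℝ)
    (hGW : IsUnit (G W * (G W)ᵀ)) :
    L * (W - η • ((G W * (G W)ᵀ)⁻¹ * G W)) * R =
      L * W * R - η • ((G (L * W * R) * (G (L * W * R))ᵀ)⁻¹ * G (L * W * R)) := by
  -- basic invertibility facts
  have hLdet : IsUnit L.det := (Matrix.isUnit_iff_isUnit_det L).mp hL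
  have hLTdet : IsUnit (Lᵀ).det := by rw [Matrix.det_transpose]; exact hLdet
  have hLTinv : (Lᵀ)⁻¹ * Lᵀ = 1 := Matrix.nonsing_inv_mul _ hLTdet
  have hLTinv' : Lᵀ * (Lᵀ)⁻¹ = 1 := Matrix.mul_nonsing_inv _ hLTdet
  have hLinv : L⁻¹ * L = 1 := Matrix.nonsing_inv_mul _ hLdet
  have hBdet : IsUnit (G W * (G W)ᵀ).det := (Matrix.isUnit_iff_isUnit_det _).mp hGW
  have hBinv : (G W * (G W)ᵀ) * (G W * (G W)ᵀ)⁻¹ = 1 := Matrix.mul_nonsing_inv _ hBdet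
  have hQQ : Q * Qᵀ = 1 := mul_eq_one_comm.mp hQ
  -- the linear map H ↦ L * H * R as a continuous linear map
  let T : Matrix (Fin m) (Fin n) ℝ →ₗ[ℝ] Matrix (Fin m) (Fin n) ℝ :=
    { toFun := fun H => L * H * R
      map_add' := fun X Y => by simp [Matrix.mul_add, Matrix.add_mul]
      map_smul' := fun c X => by simp [Matrix.mul_smul, Matrix.smul_mul] }
  let T' : Matrix (Fin m) (Fin n) ℝ →L[ℝ] Matrix (Fin m) (Fin n) ℝ :=
    LinearMap.toContinuousLinearMap T
  have hT' : HasFDerivAt (fun X : Matrix (Fin m) (Fin n) ℝ => L * X * R) T' W :=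
    T'.hasFDerivAt
  have hcomp : HasFDerivAt (fun X : Matrix (Fin m) (Fin n) ℝ => f (L * X * R))
      ((Df (L * W * R)).comp T') W := (hDf (L * W * R)).comp W hT'
  have heq : (fun X : Matrix (Fin m) (Fin n) ℝ => f (L * X * R)) = f := funext hinv
  rw [heq] at hcomp
  have hDfeq : Df W = (Df (L * W * R)).comp T' := (hDf W).unique hcomp
  -- the gradient transforms contravariantly
  have hkey : ∀ H, frobInner (G W) H = frobInner (Lᵀ * G (L * W * R) * Rᵀ) H := by
    intro H
    rw [← hDf_grad, hDfeq]
    have h1 : ((Df (L * W * R)).comp T') H = Df (L * W * R) (L * H * R) := rfl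
    rw [h1, hDf_grad, frob_move]
  have hG : G W = Lᵀ * G (L * W * R) * Rᵀ := frob_ext _ _ hkey
  have hG' : G (L * W * R) = lam⁻¹ • ((Lᵀ)⁻¹ * G W * Q) := by
    rw [hG, hR, Matrix.transpose_smul]
    simp only [Matrix.mul_smul, Matrix.smul_mul, smul_smul]
    rw [inv_mul_cancel₀ hlam, one_smul]
    simp only [← Matrix.mul_assoc]
    rw [hLTinv, Matrix.one_mul]
    simp only [Matrix.mul_assoc, hQ, Matrix.mul_one]
  have hLTT : ((Lᵀ)⁻¹)ᵀ = L⁻¹ := by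
    rw [Matrix.transpose_nonsing_inv, Matrix.transpose_transpose]
  -- product of transformed gradients
  have hprod : G (L * W * R) * (G (L * W * R))ᵀ =
      (lam⁻¹ * lam⁻¹) • ((Lᵀ)⁻¹ * (G W * (G W)ᵀ) * L⁻¹) := by
    rw [hG']
    simp only [Matrix.transpose_smul, Matrix.transpose_mul, hLTT,
      Matrix.smul_mul, Matrix.mul_smul, smul_smul]
    congr 1
    calc (Lᵀ)⁻¹ * G W * Q * (Qᵀ * ((G W)ᵀ * L⁻¹))
        = (Lᵀ)⁻¹ * G W * (Q * Qᵀ) * ((G W)ᵀ * L⁻¹) := by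
          simp only [Matrix.mul_assoc]
      _ = (Lᵀ)⁻¹ * (G W * (G W)ᵀ) * L⁻¹ := by
          rw [hQQ, Matrix.mul_one]; simp only [Matrix.mul_assoc]
  -- inverse of the product
  have hinv2 : (G (L * W * R) * (G (L * W * R))ᵀ)⁻¹ =
      (lam * lam) • (L * (G W * (G W)ᵀ)⁻¹ * Lᵀ) := by
    apply Matrix.inv_eq_right_inv
    rw [hprod]
    simp only [Matrix.smul_mul, Matrix.mul_smul, smul_smul]
    rw [show lam * lam * (lam⁻¹ * lam⁻¹) = 1 by field_simp]
    rw [show (Lᵀ)⁻¹ * (G W * (G W)ᵀ) * L⁻¹ * (L * (G W * (G W)ᵀ)⁻¹ * Lᵀ)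
        = (Lᵀ)⁻¹ * ((G W * (G W)ᵀ) * ((L⁻¹ * L) * (G W * (G W)ᵀ)⁻¹)) * Lᵀ by
          simp only [Matrix.mul_assoc]]
    rw [one_smul, hLinv, Matrix.one_mul, hBinv, Matrix.mul_one, hLTinv]
  -- the transformed update direction
  have hdir : (G (L * W * R) * (G (L * W * R))ᵀ)⁻¹ * G (L * W * R)
      = L * ((G W * (G W)ᵀ)⁻¹ * G W) * R := by
    rw [hinv2, hG', hR]
    simp only [Matrix.smul_mul, Matrix.mul_smul, smul_smul]
    rw [show lam⁻¹ * (lam * lam) = lam by field_simp]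
    congr 1
    rw [show L * (G W * (G W)ᵀ)⁻¹ * Lᵀ * ((Lᵀ)⁻¹ * G W * Q)
        = L * (G W * (G W)ᵀ)⁻¹ * ((Lᵀ * (Lᵀ)⁻¹) * G W) * Q by
          simp only [Matrix.mul_assoc]]
    rw [hLTinv', Matrix.one_mul]
    simp only [Matrix.mul_assoc]
  rw [hdir, Matrix.mul_sub, Matrix.sub_mul, Matrix.mul_smul, Matrix.smul_mul]
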